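/- Let S be a set and R ⊆ S × S a relation. For all μ, ν ∈ D(S), μ is related to ν by the lifting of R to D(S) × D(S) if and only if there exists a finitely supported probability distribution w ∈ D(S × S) whose support is contained in R and whose marginals are μ and ν, i.e., ∑_{t∈S} w(s,t) = μ(s) for every s ∈ S and ∑_{s∈S} w(s,t) = ν(t) for every t ∈ S. -/

import Mathlib

/-- A finitely supported probability distribution over `S`. -/
structure ProbDist (S : Type) where
  f : S → ℝ
  nonneg : ∀ s, 0 ≤ f s
  finSupp : (Function.support f).Finite
  sum_one : ∑ᶠ s, f s = 1

/-- The point distribution assigning probability 1 to `s`. -/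
noncomputable def ProbDist.point {S : Type} (s : S) : ProbDist S where
  f := Set.indicator {s} (fun _ => (1 : ℝ))
  nonneg t := Set.indicator_nonneg (fun _ _ => zero_le_one) t
  finSupp := (Set.finite_singleton s).subset (by
    intro t ht
    by_contra h
    exact ht (Set.indicator_of_notMem h _))
  sum_one := by
    rw [finsum_eq_single _ s]
    · simp
    · intro x hx
      simp [Set.indicator_of_notMem, hx]

/-- The lifting of a relation `R ⊆ S × D(S)` to `D(S) × D(S)`:
the smallest relation containing `(δ_s, ν)` whenever `R s ν`, and closed under
finite convex combinations. -/
inductive ProbDist.Lift {S : Type} (R : S → ProbDist S → Prop) :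
    ProbDist S → ProbDist S → Prop
  | basic {s : S} {ν : ProbDist S} : R s ν → ProbDist.Lift R (ProbDist.point s) ν
  | lin {n : ℕ} (p : Fin n → ℝ) (μs νs : Fin n → ProbDist S)
      (hp : ∀ i, p i ∈ Set.Icc (0 : ℝ) 1) (hpsum : ∑ i, p i = 1)
      (h : ∀ i, ProbDist.Lift R (μs i) (νs i)) {μ ν : ProbDist S}
      (hμ : ∀ s, μ.f s = ∑ i, p i * (μs i).f s)
      (hν : ∀ s, ν.f s = ∑ i, p i * (νs i).f s) :
      ProbDist.Lift R μ ν

/-- Lifting of a relation `R ⊆ S × S` on states: first form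
`R̂ = {(s, δ_t) : s R t} ⊆ S × D(S)`, then lift. -/
def ProbDist.LiftRel {S : Type} (R : S → S → Prop) : ProbDist S → ProbDist S → Prop :=
  ProbDist.Lift (fun s ν => ∃ t, R s t ∧ ν = ProbDist.point t)

/-!
Couplings supported on `R` are closed under point masses `δ_(s,t)` with `R s t` and under
convex combinations, so induction on the lifting produces a coupling. Conversely a coupling
`w` is the convex combination `∑ w(s,t) δ_(s,t)` over its finite support, and its marginal
conditions say exactly that `μ = ∑ w(s,t) δ_s` and `ν = ∑ w(s,t) δ_t`: one convex combination
of the basic pairs `(δ_s, δ_t)`.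
-/

namespace ProbDist

open Function

variable {S : Type}

lemma point_f_self (s : S) : (point s).f s = 1 := by
  simp [point]

lemma point_f_of_ne {s t : S} (h : t ≠ s) : (point s).f t = 0 := by
  simp [point, h]

lemma eq_of_point_f_pos {s t : S} (h : 0 < (point s).f t) : t = s := by
  by_contra hne
  exact h.ne' (point_f_of_ne hne)

lemma point_prod_f (s t : S) (a b : S) :
    (point (s, t)).f (a, b) = (point s).f a * (point t).f b := by
  simp only [point, ← Set.singleton_prod_singleton]
  exact Set.indicator_prod_one

lemma f_le_one (μ : ProbDist S) (s : S) : μ.f s ≤ 1 :=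
  μ.sum_one ▸ single_le_finsum s μ.finSupp μ.nonneg

lemma hasFiniteSupport_curry (w : ProbDist (S × S)) (s : S) :
    HasFiniteSupport fun t => w.f (s, t) :=
  w.finSupp.preimage (Prod.mk_right_injective s).injOn

lemma hasFiniteSupport_curry_swap (w : ProbDist (S × S)) (t : S) :
    HasFiniteSupport fun s => w.f (s, t) :=
  w.finSupp.preimage (Prod.mk_left_injective t).injOn

lemma finsum_mul_eq_sum (μ : ProbDist S) (g : S → ℝ) :
    ∑ᶠ s, μ.f s * g s = ∑ s : μ.finSupp.toFinset, μ.f s * g s := by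
  rw [Finset.sum_coe_sort μ.finSupp.toFinset fun s => μ.f s * g s, finsum_eq_sum_of_support_subset]
  exact (support_mul_subset_left _ _).trans μ.finSupp.coe_toFinset.superset

lemma finsum_mul_point_fst (w : ProbDist (S × S)) (s : S) :
    ∑ᶠ x, w.f x * (point x.1).f s = ∑ᶠ t, w.f (s, t) := by
  rw [finsum_curry _ (w.finSupp.subset (support_mul_subset_left _ _)),
    finsum_eq_single _ s fun a ha => by simp [point_f_of_ne (Ne.symm ha)]]
  simp [point_f_self]

lemma finsum_mul_point_snd (w : ProbDist (S × S)) (t : S) :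
    ∑ᶠ x, w.f x * (point x.2).f t = ∑ᶠ s, w.f (s, t) := by
  rw [finsum_curry _ (w.finSupp.subset (support_mul_subset_left _ _))]
  refine finsum_congr fun s => ?_
  rw [finsum_eq_single _ t fun b hb => by simp [point_f_of_ne (Ne.symm hb)]]
  simp [point_f_self]

lemma finsum_sum_mul_comm {α ι : Type*} [Fintype ι] (p : ι → ℝ) (f : ι → α → ℝ)
    (hf : ∀ i, HasFiniteSupport (f i)) :
    ∑ᶠ x, ∑ i, p i * f i x = ∑ i, p i * ∑ᶠ x, f i x := by
  rw [finsum_sum_comm _ _ fun i _ => (hf i).subset (support_mul_subset_right _ _)]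
  simp_rw [mul_finsum]

noncomputable def mix {ι : Type*} [Fintype ι] (p : ι → ℝ) (hp : ∀ i, 0 ≤ p i)
    (hpsum : ∑ i, p i = 1) (μs : ι → ProbDist S) : ProbDist S where
  f s := ∑ i, p i * (μs i).f s
  nonneg s := Finset.sum_nonneg fun i _ => mul_nonneg (hp i) ((μs i).nonneg s)
  finSupp := (Set.finite_iUnion fun i => (μs i).finSupp).subset fun s hs => by
    obtain ⟨i, -, hi⟩ := Finset.exists_ne_zero_of_sum_ne_zero hs
    exact Set.mem_iUnion.2 ⟨i, right_ne_zero_of_mul hi⟩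
  sum_one := by
    rw [finsum_sum_mul_comm p _ fun i => (μs i).finSupp]
    simp [sum_one, hpsum]

lemma Lift.of_fintype {R : S → ProbDist S → Prop} {ι : Type*} [Fintype ι] (p : ι → ℝ)
    (μs νs : ι → ProbDist S) (hp : ∀ i, p i ∈ Set.Icc (0 : ℝ) 1) (hpsum : ∑ i, p i = 1)
    (h : ∀ i, Lift R (μs i) (νs i)) {μ ν : ProbDist S}
    (hμ : ∀ s, μ.f s = ∑ i, p i * (μs i).f s) (hν : ∀ s, ν.f s = ∑ i, p i * (νs i).f s) :
    Lift R μ ν := by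
  let e := (Fintype.equivFin ι).symm
  refine .lin (p ∘ e) (μs ∘ e) (νs ∘ e) (fun i => hp _) ?_ (fun i => h _) ?_ ?_
  · rw [← hpsum]; exact e.sum_comp p
  · intro s; rw [hμ s]; exact (e.sum_comp fun i => p i * (μs i).f s).symm
  · intro s; rw [hν s]; exact (e.sum_comp fun i => p i * (νs i).f s).symm

structure IsCoupling (R : S → S → Prop) (μ ν : ProbDist S) (w : ProbDist (S × S)) : Prop where
  rel : ∀ s t, 0 < w.f (s, t) → R s t
  fst : ∀ s, ∑ᶠ t, w.f (s, t) = μ.f s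
  snd : ∀ t, ∑ᶠ s, w.f (s, t) = ν.f t

variable {R : S → S → Prop}

lemma isCoupling_point {s t : S} (h : R s t) :
    IsCoupling R (point s) (point t) (point (s, t)) where
  rel a b hab := by
    obtain ⟨rfl, rfl⟩ := Prod.mk.inj (eq_of_point_f_pos hab)
    exact h
  fst a := by simp_rw [point_prod_f, ← mul_finsum, sum_one, mul_one]
  snd b := by simp_rw [point_prod_f, ← finsum_mul, sum_one, one_mul]

lemma IsCoupling.mix {ι : Type*} [Fintype ι] {p : ι → ℝ} (hp : ∀ i, 0 ≤ p i)
    (hpsum : ∑ i, p i = 1) {μs νs : ι → ProbDist S} {ws : ι → ProbDist (S × S)}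
    (hws : ∀ i, IsCoupling R (μs i) (νs i) (ws i)) {μ ν : ProbDist S}
    (hμ : ∀ s, μ.f s = ∑ i, p i * (μs i).f s) (hν : ∀ s, ν.f s = ∑ i, p i * (νs i).f s) :
    IsCoupling R μ ν (ProbDist.mix p hp hpsum ws) where
  rel s t hst := by
    obtain ⟨i, -, hi⟩ := Finset.exists_lt_of_sum_lt (s := .univ) (f := fun _ => 0)
      (g := fun i => p i * (ws i).f (s, t)) (by simpa [ProbDist.mix] using hst)
    exact (hws i).rel s t (pos_of_mul_pos_right hi (hp i))
  fst s := by
    simp only [ProbDist.mix]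
    rw [finsum_sum_mul_comm p _ fun i => (ws i).hasFiniteSupport_curry s, hμ]
    simp only [(hws _).fst]
  snd t := by
    simp only [ProbDist.mix]
    rw [finsum_sum_mul_comm p _ fun i => (ws i).hasFiniteSupport_curry_swap t, hν]
    simp only [(hws _).snd]

lemma LiftRel.exists_isCoupling {μ ν : ProbDist S} (h : LiftRel R μ ν) :
    ∃ w, IsCoupling R μ ν w := by
  induction h with
  | basic hs =>
    obtain ⟨t, hst, rfl⟩ := hs
    exact ⟨_, isCoupling_point hst⟩
  | lin p μs νs hp hpsum _ hμ hν ih =>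
    choose ws hws using ih
    exact ⟨_, IsCoupling.mix (fun i => (hp i).1) hpsum hws hμ hν⟩

lemma IsCoupling.liftRel {μ ν : ProbDist S} {w : ProbDist (S × S)} (hw : IsCoupling R μ ν w) :
    LiftRel R μ ν := by
  have hpos (x : w.finSupp.toFinset) : 0 < w.f x :=
    (w.nonneg x).lt_of_ne' (w.finSupp.mem_toFinset.1 x.2)
  refine Lift.of_fintype (ι := w.finSupp.toFinset) (fun x => w.f x)
    (fun x => point (x : S × S).1) (fun x => point (x : S × S).2)
    (fun x => ⟨w.nonneg x, w.f_le_one x⟩) ?_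
    (fun x => .basic ⟨_, hw.rel _ _ (hpos x), rfl⟩) ?_ ?_
  · simpa [w.sum_one] using (w.finsum_mul_eq_sum fun _ => 1).symm
  · intro s; rw [← hw.fst, ← finsum_mul_point_fst, finsum_mul_eq_sum]
  · intro t; rw [← hw.snd, ← finsum_mul_point_snd, finsum_mul_eq_sum]

end ProbDist

/-- Coupling characterisation of the lifting of a state relation: `μ lift(R) ν` iff there
is a finitely supported probability distribution `w` on `S × S` supported on `R`
whose marginals are `μ` and `ν`. -/
theorem liftRel_iff_coupling {S : Type} (R : S → S → Prop) (μ ν : ProbDist S) :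
    ProbDist.LiftRel R μ ν ↔
      ∃ w : ProbDist (S × S),
        (∀ s t, 0 < w.f (s, t) → R s t) ∧
        (∀ s, ∑ᶠ t, w.f (s, t) = μ.f s) ∧
        (∀ t, ∑ᶠ s, w.f (s, t) = ν.f t) := by
  constructor
  · intro h
    obtain ⟨w, hw⟩ := h.exists_isCoupling
    exact ⟨w, hw.rel, hw.fst, hw.snd⟩
  · rintro ⟨w, hrel, hfst, hsnd⟩
    exact ProbDist.IsCoupling.liftRel ⟨hrel, hfst, hsnd⟩
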